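/- arXiv:1406.4585 — 4 statements merged into one kernel-verified Lean document; each statement's English description precedes it below -/
import Mathlib

section
/- In the coordinates u_j = y_1 + ⋯ + y_j, the quadratic Poisson bracket satisfies {u_i, u_j}^q = u_i(u_j − u_i) for i < j. -/
/-!
Partial sums are linear forms, so `∂_k u_i = [k ≤ i]` everywhere. For `k < l` the coefficient
`[k ≤ i][l ≤ j] - [l ≤ i][k ≤ j]` is `1` exactly when `k ≤ i < l ≤ j` and `0` otherwise, hence
the bracket is `∑_{k ≤ i} ∑_{i < l ≤ j} y_k y_l = u_i (u_j - u_i)`.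
-/

/-- The quadratic Poisson bracket on ℝ^m. -/
noncomputable def qbracket {m : ℕ} (F G : (Fin m → ℝ) → ℝ) (y : Fin m → ℝ) : ℝ :=
  ∑ i : Fin m, ∑ j ∈ Finset.univ.filter (fun j => i < j),
    y i * y j * (fderiv ℝ F y (Pi.single i 1) * fderiv ℝ G y (Pi.single j 1)
      - fderiv ℝ F y (Pi.single j 1) * fderiv ℝ G y (Pi.single i 1))

open Finset

theorem qbracket_of_isBoundedLinearMap {m : ℕ} {F G : (Fin m → ℝ) → ℝ}
    (hF : IsBoundedLinearMap ℝ F) (hG : IsBoundedLinearMap ℝ G) (y : Fin m → ℝ) :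
    qbracket F G y = ∑ a, ∑ b, if a < b then
      y a * y b * (F (Pi.single a 1) * G (Pi.single b 1) - F (Pi.single b 1) * G (Pi.single a 1))
      else 0 := by
  simp only [qbracket, hF.fderiv, hG.fderiv, sum_filter]
  rfl

theorem isBoundedLinearMap_finsetSum_apply {ι : Type*} [Fintype ι] (S : Finset ι) :
    IsBoundedLinearMap ℝ fun z : ι → ℝ => ∑ l ∈ S, z l := by
  have h : (fun z : ι → ℝ => ∑ l ∈ S, z l) = ⇑(∑ l ∈ S, ContinuousLinearMap.proj (R := ℝ) l) := by
    ext; simp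
  exact h ▸ ContinuousLinearMap.isBoundedLinearMap _

/-- For `a ≥ b` the right-hand side vanishes as well, since `a ≤ i < b` is then impossible. -/
theorem ite_lt_wedge_Iic_eq {α R : Type*} [LinearOrder α] [CommRing R] {i j : α} (hij : i < j)
    (a b : α) (ya yb : R) :
    (if a < b then ya * yb * ((if a ≤ i then 1 else 0) * (if b ≤ j then 1 else 0)
        - (if b ≤ i then 1 else 0) * (if a ≤ j then 1 else 0)) else 0)
      = (if a ≤ i then ya else 0) * ((if b ≤ j then yb else 0) - (if b ≤ i then yb else 0)) := by
  split_ifs <;> first | ring1 | (exfalso; order)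

/-- in the coordinates `u_i = y_1 + ⋯ + y_i`, the quadratic bracket
satisfies `{u_i, u_j}^q = u_i (u_j − u_i)` for `i < j`. -/
theorem bracket_of_partial_sums (m : ℕ) (i j : Fin m) (hij : i < j) (y : Fin m → ℝ) :
    qbracket (fun z => ∑ l ∈ Finset.univ.filter (fun l => l ≤ i), z l)
      (fun z => ∑ l ∈ Finset.univ.filter (fun l => l ≤ j), z l) y
      = (∑ l ∈ Finset.univ.filter (fun l => l ≤ i), y l) *
        ((∑ l ∈ Finset.univ.filter (fun l => l ≤ j), y l)
          - ∑ l ∈ Finset.univ.filter (fun l => l ≤ i), y l) := by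
  rw [qbracket_of_isBoundedLinearMap (isBoundedLinearMap_finsetSum_apply _)
    (isBoundedLinearMap_finsetSum_apply _)]
  simp only [sum_pi_single', mem_filter, mem_univ, true_and]
  rw [sum_filter, sum_filter, ← sum_sub_distrib, sum_mul_sum]
  exact sum_congr rfl fun a _ => sum_congr rfl fun b _ => ite_lt_wedge_Iic_eq hij a b (y a) (y b)
end

section
/- For m odd, the function F_1(y) = y_1 · (y_3 y_5 ⋯ y_m)/(y_2 y_4 ⋯ y_{m-1}) is a Casimir of the quadratic Poisson bracket: {F_1, y_i}^q = 0 for all i, wherever the denominator is nonzero. -/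
/-- `F₁ = y_1 (y_3 y_5 ⋯ y_m)/(y_2 y_4 ⋯ y_{m-1})`; with 0-based indexing the numerator
is the product over even indices and the denominator the product over odd indices. -/
noncomputable def F1 (m : ℕ) (z : Fin m → ℝ) : ℝ :=
  (∏ i ∈ Finset.univ.filter (fun i : Fin m => Even (i : ℕ)), z i) /
  (∏ i ∈ Finset.univ.filter (fun i : Fin m => Odd (i : ℕ)), z i)

/-!
`F₁` is the Laurent monomial `∏ y_j ^ e_j` with alternating exponents `e_j = (-1)^j`. For any
Laurent monomial `F` the Euler identity `y_k ∂_k F = e_k F` turns the bracket with a coordinate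
into `{F, y_i} = y_i F (∑_{a<i} e_a - ∑_{b>i} e_b)`. For alternating exponents and `m` odd both
partial sums equal `1` if `i` is odd and `0` if `i` is even, so they cancel.
-/

open Finset

-- The factor `n` absorbs the case `x = 0 = n`, where `x * x ^ (n - 1) = 0 ≠ x ^ n`.
theorem intCast_mul_mul_zpow_sub_one {x : ℝ} {n : ℤ} (h : x ≠ 0 ∨ 0 ≤ n) :
    (n : ℝ) * (x * x ^ (n - 1)) = n * x ^ n := by
  rcases eq_or_ne x 0 with rfl | hx
  · rcases eq_or_ne n 0 with rfl | hn
    · simp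
    · simp [zero_zpow n hn]
  · rw [mul_comm x, ← zpow_add_one₀ hx, sub_add_cancel]

theorem mul_fderiv_prod_zpow_apply_single {ι : Type*} [Fintype ι] [DecidableEq ι] (e : ι → ℤ)
    {y : ι → ℝ} (hy : ∀ i, y i ≠ 0 ∨ 0 ≤ e i) (k : ι) :
    y k * fderiv ℝ (fun z : ι → ℝ => ∏ i, z i ^ e i) y (Pi.single k 1) =
      e k * ∏ i, y i ^ e i := by
  have hderiv : HasFDerivAt (fun z : ι → ℝ => ∏ i, z i ^ e i)
      (∑ i, (∏ j ∈ univ.erase i, y j ^ e j) •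
        ((e i * y i ^ (e i - 1) : ℝ) • ContinuousLinearMap.proj i)) y :=
    HasFDerivAt.finsetProd fun i _ =>
      (hasDerivAt_zpow (e i) (y i) (hy i)).comp_hasFDerivAt (f := fun z : ι → ℝ => z i) y
        (hasFDerivAt_apply (𝕜 := ℝ) i y)
  rw [hderiv.fderiv, ← mul_prod_erase univ _ (mem_univ k)]
  simp only [_root_.sum_apply, smul_apply, ContinuousLinearMap.proj_apply, Pi.single_apply,
    smul_eq_mul, mul_ite, mul_one, mul_zero, sum_ite_eq', mem_univ, if_true]
  linear_combination (∏ j ∈ univ.erase k, y j ^ e j) * intCast_mul_mul_zpow_sub_one (hy k)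

theorem qbracket_apply_coord {m : ℕ} (F : (Fin m → ℝ) → ℝ) (y : Fin m → ℝ) (i : Fin m) :
    qbracket F (fun z => z i) y =
      y i * (∑ a ∈ Iio i, y a * fderiv ℝ F y (Pi.single a 1)
        - ∑ b ∈ Ioi i, y b * fderiv ℝ F y (Pi.single b 1)) := by
  have hcoord : fderiv ℝ (fun z : Fin m → ℝ => z i) y = ContinuousLinearMap.proj i :=
    (hasFDerivAt_apply (𝕜 := ℝ) i y).fderiv
  simp only [qbracket, hcoord, ContinuousLinearMap.proj_apply, Pi.single_apply, mul_ite, mul_one,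
    mul_zero, mul_sub, sum_sub_distrib]
  simp only [filter_lt_eq_Ioi, sum_ite_irrel, sum_const_zero, sum_ite_eq, mem_Ioi, ← sum_filter,
    filter_gt_eq_Iio, mem_univ, if_true, mul_sum]
  congr 1 <;> exact sum_congr rfl fun _ _ => by ring

theorem qbracket_prod_zpow_coord {m : ℕ} (e : Fin m → ℤ) {y : Fin m → ℝ}
    (hy : ∀ j, y j ≠ 0 ∨ 0 ≤ e j) (i : Fin m) :
    qbracket (fun z => ∏ j, z j ^ e j) (fun z => z i) y =
      y i * (∏ j, y j ^ e j) * ((∑ a ∈ Iio i, e a - ∑ b ∈ Ioi i, e b : ℤ) : ℝ) := by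
  simp only [qbracket_apply_coord, mul_fderiv_prod_zpow_apply_single e hy, ← sum_mul]
  push_cast
  ring

theorem sum_Iio_neg_one_pow_eq_sum_Ioi {m : ℕ} (hm : Odd m) (i : Fin m) :
    ∑ a ∈ Iio i, (-1 : ℤ) ^ (a : ℕ) = ∑ b ∈ Ioi i, (-1 : ℤ) ^ (b : ℕ) := by
  have hIio : ∑ a ∈ Iio i, (-1 : ℤ) ^ (a : ℕ) = ∑ k ∈ range i, (-1 : ℤ) ^ k := by
    rw [← Nat.Iio_eq_range, ← Fin.map_valEmbedding_Iio, sum_map]; rfl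
  have hIoi : ∑ b ∈ Ioi i, (-1 : ℤ) ^ (b : ℕ) = ∑ k ∈ Ico ((i : ℕ) + 1) m, (-1 : ℤ) ^ k := by
    rw [Finset.Ico_add_one_left_eq_Ioo, ← Fin.map_valEmbedding_Ioi, sum_map]; rfl
  rw [hIio, hIoi, sum_Ico_eq_sub _ (show (i : ℕ) + 1 ≤ m from i.2),
    neg_one_geom_sum, neg_one_geom_sum, neg_one_geom_sum]
  have hm' : ¬ Even m := Nat.not_even_iff_odd.mpr hm
  by_cases h : Even (i : ℕ) <;> simp [h, hm', Nat.even_add_one]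

theorem F1_eq_prod_zpow (m : ℕ) (z : Fin m → ℝ) : F1 m z = ∏ i, z i ^ ((-1 : ℤ) ^ (i : ℕ)) := by
  rw [← prod_filter_mul_prod_filter_not univ (fun i : Fin m => Even (i : ℕ))]
  simp only [F1, div_eq_mul_inv, ← prod_inv_distrib, Nat.not_even_iff_odd]
  congr 1 <;> refine prod_congr rfl fun i hi => ?_ <;> simp [(mem_filter.mp hi).2]

/-- for `m` odd, `F₁` is a Casimir of the quadratic bracket:
`{F₁, y_i}^q = 0` for every `i`, wherever the denominator is nonzero. -/
theorem F1_is_casimir (m : ℕ) (hm : Odd m) (y : Fin m → ℝ)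
    (hnz : ∀ j : Fin m, Odd (j : ℕ) → y j ≠ 0) (i : Fin m) :
    qbracket (F1 m) (fun z => z i) y = 0 := by
  have hexp (j : Fin m) : y j ≠ 0 ∨ 0 ≤ (-1 : ℤ) ^ (j : ℕ) := by
    rcases Nat.even_or_odd j with h | h
    · exact Or.inr (by rw [h.neg_one_pow]; exact zero_le_one)
    · exact Or.inl (hnz j h)
  rw [funext (F1_eq_prod_zpow m), qbracket_prod_zpow_coord _ hexp,
    sum_Iio_neg_one_pow_eq_sum_Ioi hm, sub_self, Int.cast_zero, mul_zero]
end

section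
/- For m odd and indices 1 ≤ i, j ≤ (m+1)/2, the functions F_i and F_j are in involution with respect to the quadratic Poisson bracket: {F_i, F_j}^q = 0 on the open set where all denominators are nonzero. -/
/-- `F_k = (y_1 + ⋯ + y_{2k-1}) (y_{2k+1} y_{2k+3} ⋯ y_m)/(y_{2k} y_{2k+2} ⋯ y_{m-1})`,
written with 0-based indexing: the sum is over indices `< 2k-1`, the numerator is the
product over even indices `≥ 2k-1`, the denominator over odd indices `≥ 2k-1`. -/
noncomputable def Fk (m k : ℕ) (z : Fin m → ℝ) : ℝ :=
  (∑ i ∈ Finset.univ.filter (fun i : Fin m => (i : ℕ) < 2 * k - 1), z i) *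
  ((∏ i ∈ Finset.univ.filter (fun i : Fin m => 2 * k - 1 ≤ (i : ℕ) ∧ Even (i : ℕ)), z i) /
   (∏ i ∈ Finset.univ.filter (fun i : Fin m => 2 * k - 1 ≤ (i : ℕ) ∧ Odd (i : ℕ)), z i))

open Finset

theorem fderiv_div_apply {𝕜 E : Type*} [NontriviallyNormedField 𝕜] [NormedAddCommGroup E]
    [NormedSpace 𝕜 E] {f g : E → 𝕜} {x : E} (hf : DifferentiableAt 𝕜 f x)
    (hg : DifferentiableAt 𝕜 g x) (hx : g x ≠ 0) (v : E) :
    fderiv 𝕜 (fun z => f z / g z) x v =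
      (fderiv 𝕜 f x v * g x - f x * fderiv 𝕜 g x v) / g x ^ 2 := by
  have hinv : HasFDerivAt (fun z => (g z)⁻¹) (-(g x ^ 2)⁻¹ • fderiv 𝕜 g x) x :=
    (hasDerivAt_inv hx).comp_hasFDerivAt x hg.hasFDerivAt
  simp only [div_eq_mul_inv]
  rw [(hf.hasFDerivAt.fun_mul hinv).fderiv]
  simp only [add_apply, smul_apply, smul_eq_mul, neg_mul, mul_neg]
  field_simp
  ring

section EulerPartial

variable {ι : Type*} [Fintype ι] [DecidableEq ι]

theorem fderiv_sum_apply_single (s : Finset ι) (y : ι → ℝ) (l : ι) :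
    fderiv ℝ (fun z : ι → ℝ => ∑ a ∈ s, z a) y (Pi.single l 1) = if l ∈ s then 1 else 0 := by
  have h : HasFDerivAt (fun z : ι → ℝ => ∑ a ∈ s, z a)
      (∑ a ∈ s, (ContinuousLinearMap.proj a : (ι → ℝ) →L[ℝ] ℝ)) y :=
    HasFDerivAt.fun_sum fun a _ => hasFDerivAt_apply a y
  simp [h.fderiv, Pi.single_apply]

theorem mul_fderiv_prod_apply_single (s : Finset ι) (y : ι → ℝ) (l : ι) :
    y l * fderiv ℝ (fun z : ι → ℝ => ∏ a ∈ s, z a) y (Pi.single l 1) =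
      if l ∈ s then ∏ a ∈ s, y a else 0 := by
  have h : HasFDerivAt (fun z : ι → ℝ => ∏ a ∈ s, z a)
      (∑ a ∈ s, (∏ b ∈ s.erase a, y b) • (ContinuousLinearMap.proj a : (ι → ℝ) →L[ℝ] ℝ)) y :=
    HasFDerivAt.finsetProd fun a _ => hasFDerivAt_apply a y
  simp only [h.fderiv, _root_.sum_apply, smul_apply, ContinuousLinearMap.proj_apply, Pi.single_apply,
    smul_eq_mul, mul_ite, mul_one, mul_zero, sum_ite_eq']
  exact ite_congr rfl (mul_prod_erase s y) fun _ => rfl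

theorem mul_fderiv_sum_mul_prod_div_prod_apply_single (A E O : Finset ι) (y : ι → ℝ)
    (hO : ∏ a ∈ O, y a ≠ 0) (l : ι) :
    y l * fderiv ℝ (fun z : ι → ℝ => (∑ a ∈ A, z a) * ((∏ a ∈ E, z a) / ∏ a ∈ O, z a)) y
        (Pi.single l 1) =
      (if l ∈ A then y l else 0) * ((∏ a ∈ E, y a) / ∏ a ∈ O, y a) +
        (∑ a ∈ A, y a) * ((∏ a ∈ E, y a) / ∏ a ∈ O, y a) *
          ((if l ∈ E then 1 else 0) - if l ∈ O then 1 else 0) := by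
  have hS : DifferentiableAt ℝ (fun z : ι → ℝ => ∑ a ∈ A, z a) y := by fun_prop
  have hN : DifferentiableAt ℝ (fun z : ι → ℝ => ∏ a ∈ E, z a) y := by fun_prop
  have hD : DifferentiableAt ℝ (fun z : ι → ℝ => ∏ a ∈ O, z a) y := by fun_prop
  have hR : DifferentiableAt ℝ (fun z : ι → ℝ => (∏ a ∈ E, z a) / ∏ a ∈ O, z a) y := by
    fun_prop (disch := exact hO)
  rw [fderiv_fun_mul hS hR]
  simp only [add_apply, smul_apply, smul_eq_mul, fderiv_div_apply hN hD hO,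
    fderiv_sum_apply_single]
  have hNl := mul_fderiv_prod_apply_single E y l
  have hDl := mul_fderiv_prod_apply_single O y l
  split_ifs at hNl hDl ⊢ <;> field_simp <;>
    linear_combination (∑ a ∈ A, y a) * (∏ a ∈ O, y a) * hNl -
      (∑ a ∈ A, y a) * (∏ a ∈ E, y a) * hDl

end EulerPartial

theorem sum_fin_sum_filter_lt {M : Type*} [AddCommMonoid M] (m : ℕ) (f : ℕ → ℕ → M) :
    ∑ a : Fin m, ∑ b ∈ univ.filter (fun b => a < b), f a b =
      ∑ b ∈ range m, ∑ a ∈ range b, f a b := by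
  have hIio : ∀ b : Fin m, ∑ a ∈ Iio b, f a b = ∑ a ∈ range b, f a b := fun b => by
    rw [← Nat.Iio_eq_range, ← Fin.map_valEmbedding_Iio, sum_map]
    rfl
  simp only [filter_lt_eq_Ioi]
  rw [sum_comm' (t' := univ) (s' := fun b => Iio b) (by simp), ← Fin.sum_univ_eq_sum_range]
  exact sum_congr rfl fun b _ => hIio b

def ltPairing (n : ℕ) (u v : ℕ → ℝ) : ℝ :=
  ∑ b ∈ range n, ∑ a ∈ range b, (u a * v b - u b * v a)

theorem ltPairing_antisymm (n : ℕ) (u v : ℕ → ℝ) : ltPairing n u v = -ltPairing n v u := by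
  simp only [ltPairing, ← sum_neg_distrib]
  exact sum_congr rfl fun _ _ => sum_congr rfl fun _ _ => by ring

theorem ltPairing_eq_sum_prefix (n : ℕ) (u v : ℕ → ℝ) :
    ltPairing n u v =
      ∑ b ∈ range n, ((∑ a ∈ range b, u a) * v b - u b * ∑ a ∈ range b, v a) := by
  simp only [ltPairing, sum_sub_distrib, sum_mul, mul_sum]

theorem qbracket_eq_mul_ltPairing {m : ℕ} {F G : (Fin m → ℝ) → ℝ} {y : Fin m → ℝ} {r s : ℝ}
    {u v : ℕ → ℝ} (hu : ∀ l : Fin m, y l * fderiv ℝ F y (Pi.single l 1) = r * u l)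
    (hv : ∀ l : Fin m, y l * fderiv ℝ G y (Pi.single l 1) = s * v l) :
    qbracket F G y = r * s * ltPairing m u v := by
  rw [ltPairing, ← sum_fin_sum_filter_lt, mul_sum]
  refine sum_congr rfl fun a _ => ?_
  rw [mul_sum]
  refine sum_congr rfl fun b _ => ?_
  linear_combination (y b * fderiv ℝ G y (Pi.single b 1)) * hu a + r * u a * hv b
    - (y a * fderiv ℝ G y (Pi.single a 1)) * hu b - r * u b * hv a

def alternatingExtension (w : ℕ → ℝ) (c n : ℕ) : ℝ :=
  if n < c then w n else (-1) ^ n * ∑ a ∈ range c, w a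

section AlternatingExtension

variable (w : ℕ → ℝ) {c : ℕ}

theorem sum_range_alternatingExtension_of_le {b : ℕ} (hb : b ≤ c) :
    ∑ a ∈ range b, alternatingExtension w c a = ∑ a ∈ range b, w a :=
  sum_congr rfl fun _ ha => if_pos ((mem_range.mp ha).trans_le hb)

theorem sum_range_alternatingExtension_of_ge (hc : Odd c) {b : ℕ} (hb : c ≤ b) :
    ∑ a ∈ range b, alternatingExtension w c a = (1 - (-1) ^ b) / 2 * ∑ a ∈ range c, w a := by
  induction b, hb using Nat.le_induction with
  | base => rw [sum_range_alternatingExtension_of_le w le_rfl, hc.neg_one_pow]; ring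
  | succ b hb ih =>
    rw [sum_range_succ, ih, alternatingExtension, if_neg hb.not_gt, pow_succ]
    ring

theorem sum_Ico_alternating_eq_zero (hc : Odd c) {d : ℕ} (hd : Odd d) (hcd : c ≤ d) :
    ∑ b ∈ Ico c d, ((1 - (-1) ^ b) / 2 * w b - (-1) ^ b * ∑ a ∈ range b, w a) = 0 := by
  obtain ⟨k, rfl⟩ : ∃ k, d = c + 2 * k := by
    rw [Nat.odd_iff] at hc hd
    exact ⟨(d - c) / 2, by omega⟩
  clear hd hcd
  induction k with
  | zero => simp
  | succ k ih =>
    have hodd : Odd (c + 2 * k) := hc.add_even (even_two_mul k)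
    rw [show c + 2 * (k + 1) = c + 2 * k + 1 + 1 by ring,
      sum_Ico_succ_top (by omega), sum_Ico_succ_top (by omega), ih, sum_range_succ,
      pow_succ, hodd.neg_one_pow]
    ring

theorem ltPairing_alternatingExtension_of_le (hc : Odd c) {d : ℕ} (hd : Odd d) (hcd : c ≤ d)
    {n : ℕ} (hdn : d ≤ n) :
    ltPairing n (alternatingExtension w c) (alternatingExtension w d) = 0 := by
  set W := ∑ a ∈ range c, w a
  have hterm : ∀ b, (∑ a ∈ range b, alternatingExtension w c a) * alternatingExtension w d b -
      alternatingExtension w c b * ∑ a ∈ range b, alternatingExtension w d a =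
      if b ∈ Ico c d then W * ((1 - (-1) ^ b) / 2 * w b - (-1) ^ b * ∑ a ∈ range b, w a)
      else 0 := by
    intro b
    rcases lt_or_ge b c with hbc | hcb
    · rw [sum_range_alternatingExtension_of_le w hbc.le,
        sum_range_alternatingExtension_of_le w (hbc.le.trans hcd), alternatingExtension,
        alternatingExtension, if_pos hbc, if_pos (hbc.trans_le hcd),
        if_neg (by simp only [mem_Ico]; omega)]
      ring
    rcases lt_or_ge b d with hbd | hdb
    · rw [sum_range_alternatingExtension_of_ge w hc hcb,
        sum_range_alternatingExtension_of_le w hbd.le, alternatingExtension,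
        alternatingExtension, if_neg hcb.not_gt, if_pos hbd, if_pos (mem_Ico.mpr ⟨hcb, hbd⟩)]
      ring
    · rw [sum_range_alternatingExtension_of_ge w hc hcb,
        sum_range_alternatingExtension_of_ge w hd hdb, alternatingExtension,
        alternatingExtension, if_neg hcb.not_gt, if_neg hdb.not_gt,
        if_neg (by simp only [mem_Ico]; omega)]
      ring
  rw [ltPairing_eq_sum_prefix, sum_congr rfl fun b _ => hterm b, ← sum_filter,
    filter_mem_eq_inter, inter_eq_right.mpr ?_, ← mul_sum,
    sum_Ico_alternating_eq_zero w hc hd hcd, mul_zero]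
  intro b hb
  simp only [mem_Ico, mem_range] at hb ⊢
  omega

theorem ltPairing_alternatingExtension (hc : Odd c) {d : ℕ} (hd : Odd d) {n : ℕ} (hcn : c ≤ n)
    (hdn : d ≤ n) : ltPairing n (alternatingExtension w c) (alternatingExtension w d) = 0 := by
  rcases le_total c d with hcd | hdc
  · exact ltPairing_alternatingExtension_of_le w hc hd hcd hdn
  · rw [ltPairing_antisymm, ltPairing_alternatingExtension_of_le w hd hc hdc hcn, neg_zero]

end AlternatingExtension

theorem sum_filter_val_lt_eq_sum_range {m c : ℕ} (hc : c ≤ m) (y : Fin m → ℝ) {w : ℕ → ℝ}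
    (hw : ∀ l : Fin m, w l = y l) :
    ∑ a ∈ univ.filter (fun a : Fin m => (a : ℕ) < c), y a = ∑ n ∈ range c, w n := by
  have hrange : range c = (univ.filter (fun a : Fin m => (a : ℕ) < c)).map Fin.valEmbedding := by
    ext n
    simp only [mem_range, mem_map, mem_filter, mem_univ, true_and, Fin.valEmbedding_apply]
    exact ⟨fun hn => ⟨⟨n, by omega⟩, hn, rfl⟩, by rintro ⟨a, ha, rfl⟩; exact ha⟩
  rw [hrange, sum_map]
  exact sum_congr rfl fun a _ => (hw a).symm

theorem mul_fderiv_Fk_apply_single {m k : ℕ} (hk : 2 * k - 1 ≤ m) (y : Fin m → ℝ)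
    (hy : ∀ l : Fin m, Odd (l : ℕ) → y l ≠ 0) {w : ℕ → ℝ} (hw : ∀ l : Fin m, w l = y l)
    (l : Fin m) :
    y l * fderiv ℝ (Fk m k) y (Pi.single l 1) =
      (∏ i ∈ univ.filter (fun i : Fin m => 2 * k - 1 ≤ (i : ℕ) ∧ Even (i : ℕ)), y i) /
        (∏ i ∈ univ.filter (fun i : Fin m => 2 * k - 1 ≤ (i : ℕ) ∧ Odd (i : ℕ)), y i) *
        alternatingExtension w (2 * k - 1) l := by
  have hO : ∏ i ∈ univ.filter (fun i : Fin m => 2 * k - 1 ≤ (i : ℕ) ∧ Odd (i : ℕ)), y i ≠ 0 :=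
    prod_ne_zero_iff.mpr fun i hi => hy i (mem_filter.mp hi).2.2
  unfold Fk
  rw [mul_fderiv_sum_mul_prod_div_prod_apply_single _ _ _ y hO,
    sum_filter_val_lt_eq_sum_range hk y hw, alternatingExtension, hw]
  simp only [mem_filter, mem_univ, true_and]
  by_cases hlc : (l : ℕ) < 2 * k - 1
  · rw [if_pos hlc, if_pos hlc, if_neg (by omega), if_neg (by omega)]
    ring
  rw [if_neg hlc, if_neg hlc]
  rcases Nat.even_or_odd (l : ℕ) with hl | hl
  · rw [if_pos ⟨by omega, hl⟩, if_neg fun h => Nat.not_odd_iff_even.mpr hl h.2, hl.neg_one_pow]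
    ring
  · rw [if_neg fun h => Nat.not_even_iff_odd.mpr hl h.2, if_pos ⟨by omega, hl⟩, hl.neg_one_pow]
    ring

theorem Fk_in_involution_general (m : ℕ) (i j : ℕ)
    (hi1 : 1 ≤ i) (hi2 : i ≤ (m + 1) / 2) (hj1 : 1 ≤ j) (hj2 : j ≤ (m + 1) / 2)
    (y : Fin m → ℝ) (hnz : ∀ l : Fin m, Odd (l : ℕ) → y l ≠ 0) :
    qbracket (Fk m i) (Fk m j) y = 0 := by
  set w : ℕ → ℝ := fun n => if h : n < m then y ⟨n, h⟩ else 0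
  have hw : ∀ l : Fin m, w l = y l := fun l => dif_pos l.isLt
  have hodd : ∀ k, 1 ≤ k → Odd (2 * k - 1) := fun k hk => Nat.odd_iff.mpr (by omega)
  rw [qbracket_eq_mul_ltPairing (mul_fderiv_Fk_apply_single (k := i) (by omega) y hnz hw)
      (mul_fderiv_Fk_apply_single (k := j) (by omega) y hnz hw),
    ltPairing_alternatingExtension w (hodd i hi1) (hodd j hj1) (by omega) (by omega), mul_zero]

/-- for `m` odd and `1 ≤ i, j ≤ (m+1)/2`, the functions `F_i` and `F_j`
are in involution: `{F_i, F_j}^q = 0` where all denominators are nonzero. -/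
theorem Fk_in_involution (m : ℕ) (hm : Odd m) (i j : ℕ)
    (hi1 : 1 ≤ i) (hi2 : i ≤ (m + 1) / 2) (hj1 : 1 ≤ j) (hj2 : j ≤ (m + 1) / 2)
    (y : Fin m → ℝ) (hnz : ∀ l : Fin m, Odd (l : ℕ) → y l ≠ 0) :
    qbracket (Fk m i) (Fk m j) y = 0 :=
  Fk_in_involution_general m i j hi1 hi2 hj1 hj2 y hnz
end

section
/- For the quadratic Poisson bracket on ℝ^m, the Poisson bracket of u_i = y_1+⋯+y_i with H = y_1+⋯+y_m is {u_i, H}^q = u_i(H − u_i); consequently the Kahan substitution u_i ↦ u_i(1+εH)/(1−εH+2εu_i) fixes H and each level set {H = c} is invariant. -/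
/-!
Both functions are linear, so their differentials are constant and the bracket is
`∑_{a<b} y_a y_b ([a ≤ i] − [b ≤ i])`. For `a < b` the bracketed difference is the indicator of
`a ≤ i < b`, so only pairs straddling `i` survive and their sum factors as
`(∑_{a ≤ i} y_a)(∑_{b > i} y_b) = u_i (H − u_i)`. With `u_i = H` the Kahan denominator becomes
`1 + εH`, which cancels against the numerator.
-/

open Finset

theorem fderiv_sum_coord_apply {ι : Type*} [Fintype ι] (S : Finset ι) (y v : ι → ℝ) :
    fderiv ℝ (fun z : ι → ℝ => ∑ l ∈ S, z l) y v = ∑ l ∈ S, v l := by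
  have h : HasFDerivAt (fun z : ι → ℝ => ∑ l ∈ S, z l)
      (∑ l ∈ S, ContinuousLinearMap.proj (R := ℝ) (φ := fun _ : ι => ℝ) l) y :=
    HasFDerivAt.fun_sum fun l _ => hasFDerivAt_apply l y
  simp [h.fderiv]

theorem qbracket_sum_coord_sum_coord {m : ℕ} (S : Finset (Fin m)) (y : Fin m → ℝ) :
    qbracket (fun z => ∑ l ∈ S, z l) (fun z => ∑ l, z l) y
      = ∑ a, ∑ b ∈ univ.filter (a < ·),
          y a * y b * ((if a ∈ S then 1 else 0) - (if b ∈ S then 1 else 0)) := by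
  simp only [qbracket, fderiv_sum_coord_apply, sum_pi_single', mem_univ, if_true, mul_one]

theorem sum_pairs_lt_ite_le_sub_eq_prefix_mul_suffix {ι : Type*} [Fintype ι] [LinearOrder ι]
    (i : ι) (y : ι → ℝ) :
    ∑ a, ∑ b ∈ univ.filter (a < ·),
        y a * y b * ((if a ≤ i then 1 else 0) - (if b ≤ i then 1 else 0))
      = (∑ l ∈ univ.filter (· ≤ i), y l) * ((∑ l, y l) - ∑ l ∈ univ.filter (· ≤ i), y l) := by
  have hsplit :
      (∑ l, y l) - ∑ l ∈ univ.filter (· ≤ i), y l = ∑ l ∈ univ.filter (¬ · ≤ i), y l := by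
    rw [sub_eq_iff_eq_add', sum_filter_add_sum_filter_not]
  rw [hsplit, sum_mul_sum]
  simp only [sum_filter]
  refine sum_congr rfl fun a _ => ?_
  split_ifs with ha
  · refine sum_congr rfl fun b _ => ?_
    split_ifs <;> first | (exfalso; order) | ring
  · refine sum_eq_zero fun b _ => ?_
    split_ifs <;> first | (exfalso; order) | ring

/-- `{u_i, H}^q = u_i (H − u_i)` for `u_i = y_1 + ⋯ + y_i`, `H = y_1 + ⋯ + y_m`;
and the Kahan substitution `u_i ↦ u_i (1+εH)/(1−εH+2εu_i)` fixes `H` (applied to `i = m`),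
so each level set `{H = c}` is invariant. -/
theorem bracket_ui_H_and_H_fixed (m : ℕ) (i : Fin m) (y : Fin m → ℝ)
    (ε : ℝ) (u : ℕ → ℝ) (hden : 1 - ε * u m + 2 * ε * u m ≠ 0) :
    (qbracket (fun z => ∑ l ∈ Finset.univ.filter (fun l => l ≤ i), z l) (fun z => ∑ l, z l) y
      = (∑ l ∈ Finset.univ.filter (fun l => l ≤ i), y l) *
        ((∑ l, y l) - ∑ l ∈ Finset.univ.filter (fun l => l ≤ i), y l))
    ∧ u m * (1 + ε * u m) / (1 - ε * u m + 2 * ε * u m) = u m := by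
  constructor
  · rw [qbracket_sum_coord_sum_coord, ← sum_pairs_lt_ite_le_sub_eq_prefix_mul_suffix]
    simp only [mem_filter, mem_univ, true_and]
  · have hdenom : 1 - ε * u m + 2 * ε * u m = 1 + ε * u m := by ring
    rw [hdenom] at hden ⊢
    exact mul_div_cancel_right₀ (u m) hden
end
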